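/- arXiv:2503.01808 — 4 statements merged into one kernel-verified Lean document; each statement's English description precedes it below -/
import Mathlib

section
/- Let G be a directed graph whose underlying undirected graph admits a tree decomposition T such that: (i) for every bag X_t, the induced directed subgraph G[X_t] is acyclic, and (ii) for every bag X_t and every pair of distinct vertices p, q ∈ X_t, exactly one of the arcs (p,q) or (q,p) is present in G. Moreover assume every arc of G has both endpoints in some common bag. Then G is acyclic. -/
/-- A directed cycle of positive length: distinct vertices arranged cyclically
with an arc from each to the next. -/
def HasDirCycle {V : Type*} (G : V → V → Prop) : Prop :=
  ∃ (n : ℕ) (hn : 0 < n) (f : Fin n → V), Function.Injective f ∧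
    ∀ i : Fin n, G (f i) (f ⟨(i.1 + 1) % n, Nat.mod_lt _ hn⟩)

/-!
Take a shortest directed cycle `v₀ → v₁ → ⋯ → vₙ → v₀`. The bags containing a fixed vertex form
a subtree of `T`, and consecutive vertices of the cycle share a bag, so by a Helly-type property of
subtrees some bag contains three consecutive vertices `vᵢ₋₁, vᵢ, vᵢ₊₁`. Inside a bag, `G` is
acyclic and total, hence transitive, so `vᵢ₋₁ → vᵢ₊₁`, and skipping `vᵢ` gives a shorter cycle.
-/

section DirCycle

variable {V : Type*} {G : V → V → Prop}

/-- A directed cycle of length `n + 1`; indexing by `Fin (n + 1)` makes the successor of `i`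
simply `i + 1`. -/
structure IsDirCycle (G : V → V → Prop) {n : ℕ} (f : Fin (n + 1) → V) : Prop where
  injective : Function.Injective f
  rel_add_one : ∀ i, G (f i) (f (i + 1))

lemma hasDirCycle_iff_exists_isDirCycle : HasDirCycle G ↔ ∃ n, ∃ f : Fin (n + 1) → V, IsDirCycle G f := by
  constructor
  · rintro ⟨_ | n, hn, f, hf, hG⟩
    · exact absurd hn (lt_irrefl 0)
    · refine ⟨n, f, hf, fun i => ?_⟩
      convert hG i using 2
      ext
      simp [Fin.val_add]
  · rintro ⟨n, f, hf, hG⟩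
    refine ⟨n + 1, n.succ_pos, f, hf, fun i => ?_⟩
    convert hG i using 2
    ext
    simp [Fin.val_add]

lemma hasDirCycle_of_rel_self {a : V} (h : G a a) : HasDirCycle G :=
  hasDirCycle_iff_exists_isDirCycle.mpr ⟨0, fun _ => a, ⟨fun i j _ => Subsingleton.elim (α := Fin 1) i j, fun _ => h⟩⟩

lemma hasDirCycle_of_triangle {a b c : V} (hab : a ≠ b) (hbc : b ≠ c) (hac : a ≠ c)
    (h₁ : G a b) (h₂ : G b c) (h₃ : G c a) : HasDirCycle G := by
  refine hasDirCycle_iff_exists_isDirCycle.mpr ⟨2, ![a, b, c], ⟨?_, ?_⟩⟩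
  · intro i j hij
    fin_cases i <;> fin_cases j <;> simp_all [eq_comm]
  · intro i
    fin_cases i <;> assumption

lemma not_hasDirCycle_of_forall_exists_shorter
    (h : ∀ n (f : Fin (n + 1) → V), IsDirCycle G f →
      ∃ m < n, ∃ g : Fin (m + 1) → V, IsDirCycle G g) :
    ¬ HasDirCycle G := by
  rw [hasDirCycle_iff_exists_isDirCycle]
  rintro ⟨n, f, hf⟩
  induction n using Nat.strong_induction_on with
  | _ n ih =>
    obtain ⟨m, hm, g, hg⟩ := h n f hf
    exact ih m hm g hg

namespace IsDirCycle

variable {n : ℕ}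

lemma comp_add_right {f : Fin (n + 1) → V} (hf : IsDirCycle G f) (c : Fin (n + 1)) :
    IsDirCycle G (fun i => f (i + c)) where
  injective := hf.injective.comp (add_left_injective c)
  rel_add_one i := by simpa only [add_right_comm] using hf.rel_add_one (i + c)

lemma init {f : Fin (n + 2) → V} (hf : IsDirCycle G f)
    (h : G (f (Fin.last n).castSucc) (f 0)) : IsDirCycle G (Fin.init f) where
  injective := hf.injective.comp (Fin.castSucc_injective _)
  rel_add_one i := by
    induction i using Fin.lastCases with
    | last => simpa [Fin.init] using h
    | cast i => simpa [Fin.init, Fin.coeSucc_eq_succ] using hf.rel_add_one i.castSucc.castSucc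

lemma exists_isDirCycle_of_rel_sub_one_add_one {f : Fin (n + 2) → V} (hf : IsDirCycle G f) (i : Fin (n + 2))
    (h : G (f (i - 1)) (f (i + 1))) : ∃ g : Fin (n + 1) → V, IsDirCycle G g := by
  have hlast : (Fin.last n).castSucc + 1 + 1 = (0 : Fin (n + 2)) := by
    rw [Fin.coeSucc_eq_succ, Fin.succ_last, Fin.last_add_one]
  have hshift : (Fin.last n).castSucc + (i + 1) = i - 1 := eq_sub_of_add_eq <| by
    rw [show (Fin.last n).castSucc + (i + 1) + 1 = (Fin.last n).castSucc + 1 + 1 + i by abel,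
      hlast, zero_add]
  exact ⟨_, (hf.comp_add_right (i + 1)).init (by simpa [hshift] using h)⟩

end IsDirCycle

lemma rel_trans_of_not_hasDirCycle {s : Set V}
    (hacyc : ¬ HasDirCycle (fun u v => G u v ∧ u ∈ s ∧ v ∈ s))
    (htot : ∀ p ∈ s, ∀ q ∈ s, p ≠ q → (G p q ↔ ¬ G q p))
    {a b c : V} (ha : a ∈ s) (hb : b ∈ s) (hc : c ∈ s) (hab : G a b) (hbc : G b c) :
    G a c := by
  have hirrefl {x} (hx : x ∈ s) (hxx : G x x) : False :=
    hacyc (hasDirCycle_of_rel_self ⟨hxx, hx, hx⟩)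
  have hne_ab : a ≠ b := by rintro rfl; exact hirrefl ha hab
  have hne_bc : b ≠ c := by rintro rfl; exact hirrefl hb hbc
  have hne_ac : a ≠ c := by rintro rfl; exact (htot a ha b hb hne_ab).mp hab hbc
  by_contra hac
  exact hacyc (hasDirCycle_of_triangle hne_ab hne_bc hne_ac ⟨hab, ha, hb⟩ ⟨hbc, hb, hc⟩
    ⟨(htot c hc a ha hne_ac.symm).mpr hac, hc, ha⟩)

end DirCycle

namespace SimpleGraph.IsTree

variable {ι : Type*} {T : SimpleGraph ι} (hT : T.IsTree)
include hT

noncomputable def path (a b : ι) : T.Walk a b :=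
  (hT.existsUnique_path a b).exists.choose

lemma isPath_path (a b : ι) : (hT.path a b).IsPath :=
  (hT.existsUnique_path a b).exists.choose_spec

lemma eq_path {a b : ι} {p : T.Walk a b} (hp : p.IsPath) : p = hT.path a b :=
  (hT.existsUnique_path a b).unique hp (hT.isPath_path a b)

lemma path_eq_append {a b x : ι} (hx : x ∈ (hT.path a b).support) :
    hT.path a b = (hT.path a x).append (hT.path x b) := by
  classical
  rw [← hT.eq_path ((hT.isPath_path a b).takeUntil hx),
    ← hT.eq_path ((hT.isPath_path a b).dropUntil hx), Walk.take_spec]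

lemma mem_of_mem_support_path {S : Set ι} (hS : (T.induce S).Connected) {a b : ι}
    (ha : a ∈ S) (hb : b ∈ S) {x : ι} (hx : x ∈ (hT.path a b).support) : x ∈ S := by
  classical
  obtain ⟨w⟩ := hS.preconnected ⟨a, ha⟩ ⟨b, hb⟩
  have h := congrArg Walk.support
    (hT.eq_path (w.bypass_isPath.map (f := (Embedding.induce S).toHom) Subtype.val_injective))
  change _ = (hT.path a b).support at h
  rw [← h, Walk.support_map] at hx
  obtain ⟨y, -, rfl⟩ := List.mem_map.mp hx
  exact y.2

lemma mem_support_path_of_forall_length_le {S : Set ι} (hS : (T.induce S).Connected)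
    {r g : ι} (hg : g ∈ S) (hmin : ∀ x ∈ S, (hT.path r g).length ≤ (hT.path r x).length)
    {x : ι} (hx : x ∈ S) : g ∈ (hT.path r x).support := by
  suffices h : ∀ {y z : S}, (T.induce S).Walk y z → z.1 = g → g ∈ (hT.path r y).support from
    h (hS.preconnected ⟨x, hx⟩ ⟨g, hg⟩).some rfl
  intro y z w hz
  induction w with
  | nil => exact hz ▸ Walk.end_mem_support _
  | @cons u v _ huv _ ih =>
    replace huv : T.Adj u v := huv
    replace ih := ih hz
    -- The tree paths from `r` to the adjacent vertices `u`, `v` differ by the edge `uv`.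
    by_cases hup : u.1 ∈ (hT.path r v).support
    · have hconcat := hT.isAcyclic.path_concat (hT.isPath_path r u) (hT.isPath_path r v) huv hup
      rw [hconcat, Walk.support_concat, List.mem_append, List.mem_singleton] at ih
      refine ih.resolve_right fun hgv => ?_
      have := hmin u u.2
      rw [hgv, hconcat, Walk.length_concat] at this
      omega
    · have hvp := hT.isAcyclic.mem_support_of_ne_mem_support_of_adj_of_isPath
        (hT.isPath_path r u) (hT.isPath_path r v) huv hup
      rw [hT.isAcyclic.path_concat (hT.isPath_path r v) (hT.isPath_path r u) huv.symm hvp,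
        Walk.support_concat]
      exact List.mem_append_left _ ih

lemma exists_mem_forall_mem_of_inter_nonempty {κ : Type*} [Finite κ] [Nonempty κ]
    (S : κ → Set ι) (hS : ∀ k, (T.induce (S k)).Connected) :
    ∃ j, ∃ s ∈ S j, ∀ k, (S j ∩ S k).Nonempty → s ∈ S k := by
  obtain ⟨r⟩ := hT.connected.nonempty
  have hne k : (S k).Nonempty := Set.nonempty_coe_sort.mp (hS k).nonempty
  let depth x := (hT.path r x).length
  let g k := Function.argminOn depth (S k) (hne k)
  have hgS k : g k ∈ S k := Function.argminOn_mem _ _ _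
  have hg k {x} (hx : x ∈ S k) : g k ∈ (hT.path r x).support :=
    hT.mem_support_path_of_forall_length_le (hS k) (hgS k)
      (fun _ hy => Function.argminOn_le depth _ hy) hx
  -- The member whose vertex nearest to `r` is deepest works, with that vertex as `s`.
  obtain ⟨j, hj⟩ := Finite.exists_max fun k => depth (g k)
  refine ⟨j, g j, hgS j, fun k ⟨u, huj, huk⟩ => ?_⟩
  have hgj := hg j huj
  rw [hT.path_eq_append (hg k huk), Walk.mem_support_append_iff] at hgj
  rcases hgj with hgj | hgj
  · have hlen := congrArg Walk.length (hT.path_eq_append hgj)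
    rw [Walk.length_append] at hlen
    have hjk : (hT.path r (g k)).length ≤ (hT.path r (g j)).length := hj k
    exact Walk.eq_of_length_eq_zero (show (hT.path (g j) (g k)).length = 0 by omega) ▸ hgS k
  · exact hT.mem_of_mem_support_path (hS k) (hgS k) huk hgj

end SimpleGraph.IsTree

theorem acyclic_of_treeDecomposition_general {V ι : Type*} (G : V → V → Prop)
    (T : SimpleGraph ι) (X : ι → Set V)
    (hT : T.IsTree)
    (hT2 : ∀ u v : V, G u v ∨ G v u → ∃ t : ι, u ∈ X t ∧ v ∈ X t)
    (hT3 : ∀ v : V, (T.induce {t : ι | v ∈ X t}).Connected)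
    (hbagAcyclic : ∀ t : ι,
      ¬ HasDirCycle (fun u v => G u v ∧ u ∈ X t ∧ v ∈ X t))
    (hbagTotal : ∀ t : ι, ∀ p ∈ X t, ∀ q ∈ X t, p ≠ q → (G p q ↔ ¬ G q p)) :
    ¬ HasDirCycle G := by
  refine not_hasDirCycle_of_forall_exists_shorter fun n f hf => ?_
  have hmeet (i : Fin (n + 1)) : ({t | f i ∈ X t} ∩ {t | f (i + 1) ∈ X t}).Nonempty :=
    hT2 _ _ (Or.inl (hf.rel_add_one i))
  obtain ⟨i, s, hsi, hs⟩ := hT.exists_mem_forall_mem_of_inter_nonempty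
    (fun i => {t | f i ∈ X t}) (fun i => hT3 (f i))
  have hprev : f (i - 1) ∈ X s := hs (i - 1) <| by
    simpa only [Set.inter_comm, sub_add_cancel] using hmeet (i - 1)
  have hnext : f (i + 1) ∈ X s := hs (i + 1) (hmeet i)
  have hshort : G (f (i - 1)) (f (i + 1)) :=
    rel_trans_of_not_hasDirCycle (hbagAcyclic s) (hbagTotal s) hprev hsi hnext
      (by simpa only [sub_add_cancel] using hf.rel_add_one (i - 1)) (hf.rel_add_one i)
  cases n with
  | zero =>
    rw [Subsingleton.elim (α := Fin 1) (i - 1) (i + 1)] at hshort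
    exact (hbagAcyclic s (hasDirCycle_of_rel_self ⟨hshort, hnext, hnext⟩)).elim
  | succ m => exact ⟨m, m.lt_succ_self, hf.exists_isDirCycle_of_rel_sub_one_add_one i hshort⟩

/-- Let `G` be a directed graph whose underlying undirected graph admits a tree
decomposition `(T, X)` such that (i) every bag induces an acyclic directed
subgraph, and (ii) within every bag, every pair of distinct vertices is joined
by exactly one arc. Moreover every arc of `G` has both endpoints in a common
bag. Then `G` is acyclic. -/
theorem acyclic_of_treeDecomposition {V ι : Type*} (G : V → V → Prop)
    (T : SimpleGraph ι) (X : ι → Set V)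
    (hT : T.IsTree)
    (hT1 : ∀ v : V, ∃ t : ι, v ∈ X t)
    (hT2 : ∀ u v : V, G u v ∨ G v u → ∃ t : ι, u ∈ X t ∧ v ∈ X t)
    (hT3 : ∀ v : V, (T.induce {t : ι | v ∈ X t}).Connected)
    (hbagAcyclic : ∀ t : ι,
      ¬ HasDirCycle (fun u v => G u v ∧ u ∈ X t ∧ v ∈ X t))
    (hbagTotal : ∀ t : ι, ∀ p ∈ X t, ∀ q ∈ X t, p ≠ q → (G p q ↔ ¬ G q p)) :
    ¬ HasDirCycle G :=
  acyclic_of_treeDecomposition_general G T X hT hT2 hT3 hbagAcyclic hbagTotal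
end

section
/- Let G be a finite graph and let z be a new vertex not in V(G). Consider the set of betweenness restrictions R = {(u, z, v) : {u,v} ∈ E(G)} over the ground set V(G) ∪ {z}. Then G has a cut (S, T) with cut set of size at least k if and only if there is a strict total order ≺ on V(G) ∪ {z} satisfying at least k of the restrictions in R. -/
/-!
A strict total order on `V ∪ {z}` satisfies the restriction `(u, z, v)` exactly when one of
`u, v` lies below `z` and the other above it, so the satisfied restrictions are precisely the
edges of the cut whose first side consists of the vertices below `z`. Conversely every
`S ⊆ V` is the set of vertices below `z` for some strict total order: order by the rank
`S < z < V \ S` and break ties by a well-order.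
-/

def SimpleGraph.cutSet {V : Type*} (G : SimpleGraph V) (S : Set V) : Set (Sym2 V) :=
  {e ∈ G.edgeSet | ∃ u v : V, e = s(u, v) ∧ u ∈ S ∧ v ∉ S}

theorem exists_isStrictTotalOrder_refining {α β : Type*} [LinearOrder β] (f : α → β) :
    ∃ r : α → α → Prop, IsStrictTotalOrder α r ∧ ∀ a b, f a < f b → r a b := by
  classical
  let : LinearOrder α := linearOrderOfSTO WellOrderingRel
  let key : α → β ×ₗ α := fun a => toLex (f a, a)
  have hkey : key.Injective := fun a b h => congrArg Prod.snd (toLex.injective h)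
  exact ⟨Function.onFun (· < ·) key, hkey.isStrictTotalOrder_onFun _,
    fun a b h => Prod.Lex.toLex_lt_toLex.2 (Or.inl h)⟩

theorem exists_isStrictTotalOrder_setOf_rel_none_eq {V : Type*} (S : Set V) :
    ∃ r : Option V → Option V → Prop, IsStrictTotalOrder (Option V) r ∧
      {v | r (some v) none} = S := by
  classical
  let rank : Option V → ℕ
    | none => 1
    | some v => if v ∈ S then 0 else 2
  obtain ⟨r, hr, hrank⟩ := exists_isStrictTotalOrder_refining rank
  refine ⟨r, hr, Set.ext fun v => ⟨fun hv => ?_, fun hv => hrank _ _ (by simp [rank, hv])⟩⟩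
  by_contra hvS
  exact asymm hv (hrank _ _ (by simp [rank, hvS]))

theorem setOf_between_none_eq_cutSet {V : Type*} (G : SimpleGraph V)
    (r : Option V → Option V → Prop) [IsStrictTotalOrder (Option V) r] :
    {e ∈ G.edgeSet | ∃ u v : V, e = s(u, v) ∧
        ((r (some u) none ∧ r none (some v)) ∨ (r (some v) none ∧ r none (some u)))} =
      G.cutSet {v | r (some v) none} := by
  ext e
  constructor
  · rintro ⟨he, u, v, rfl, ⟨hu, hv⟩ | ⟨hv, hu⟩⟩
    · exact ⟨he, u, v, rfl, hu, asymm hv⟩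
    · exact ⟨he, v, u, Sym2.eq_swap, hv, asymm hu⟩
  · rintro ⟨he, u, v, rfl, hu, hv⟩
    have hv' : r none (some v) :=
      (trichotomous_of r (some v) none).resolve_left hv |>.resolve_left (Option.some_ne_none v)
    exact ⟨he, u, v, rfl, Or.inl ⟨hu, hv'⟩⟩

theorem maxcut_iff_betweenness_general {V : Type*} (G : SimpleGraph V)
    (k : ℕ) :
    (∃ S : Set V,
        k ≤ {e ∈ G.edgeSet | ∃ u v : V, e = s(u, v) ∧ u ∈ S ∧ v ∉ S}.ncard) ↔
    (∃ r : Option V → Option V → Prop, IsStrictTotalOrder (Option V) r ∧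
        k ≤ {e ∈ G.edgeSet | ∃ u v : V, e = s(u, v) ∧
              ((r (some u) none ∧ r none (some v)) ∨
               (r (some v) none ∧ r none (some u)))}.ncard) := by
  constructor
  · rintro ⟨S, hS⟩
    obtain ⟨r, hr, rfl⟩ := exists_isStrictTotalOrder_setOf_rel_none_eq S
    exact ⟨r, hr, by rwa [setOf_between_none_eq_cutSet]⟩
  · rintro ⟨r, hr, hk⟩
    exact ⟨{v | r (some v) none}, by rwa [setOf_between_none_eq_cutSet] at hk⟩

/-- Let `G` be a finite graph and let `z` be a new vertex (modelled as `none`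
in `Option V`). Consider the betweenness restrictions `(u, z, v)` for every
edge `{u,v}` of `G`. Then `G` has a cut with cut set of size at least `k` iff
there is a strict total order `≺` on `V(G) ∪ {z}` satisfying at least `k` of
the restrictions. -/
theorem maxcut_iff_betweenness {V : Type*} [Fintype V] (G : SimpleGraph V)
    (k : ℕ) :
    (∃ S : Set V,
        k ≤ {e ∈ G.edgeSet | ∃ u v : V, e = s(u, v) ∧ u ∈ S ∧ v ∉ S}.ncard) ↔
    (∃ r : Option V → Option V → Prop, IsStrictTotalOrder (Option V) r ∧
        k ≤ {e ∈ G.edgeSet | ∃ u v : V, e = s(u, v) ∧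
              ((r (some u) none ∧ r none (some v)) ∨
               (r (some v) none ∧ r none (some u)))}.ncard) :=
  maxcut_iff_betweenness_general G k
end

section
/- Let S be a finite set, R ⊆ S × S × S a set of restrictions with pairwise-distinct entries, and β a positive integer. Construct the instance consisting of β+1 disjoint copies of (S, R), i.e., ground set S × {0,...,β} with restriction set R' = {((a,i),(b,i),(c,i)) : (a,b,c) ∈ R, 0 ≤ i ≤ β}. Then the minimum number of violated restrictions of R' over all total orders on S × {0,...,β} equals (β+1) times the minimum number of violated restrictions of R over all total orders on S. In particular, this minimum is divisible by β+1. -/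
/-!
A strict total order on the disjoint union `S × ι` of copies of `(S, R)` violates, in copy `i`,
exactly the restrictions of `R` violated by its restriction to `S × {i}`; these restrictions are
strict total orders on `S`, so every order on the copies violates at least `|ι|` times the minimum.
Conversely, ordering `S × ι` lexicographically by an optimal order on `S` restricts to that same
optimal order on every copy, so the bound is attained.
-/

/-- The number of restrictions in `R` violated by the strict total order `r`:
a restriction `(a,b,c)` is satisfied if `a ≺ b ≺ c` or `c ≺ b ≺ a`. -/
noncomputable def violCount {S : Type*} (R : Set (S × S × S)) (r : S → S → Prop) : ℕ :=
  {t ∈ R | ¬ ((r t.1 t.2.1 ∧ r t.2.1 t.2.2) ∨ (r t.2.2 t.2.1 ∧ r t.2.1 t.1))}.ncard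

instance Prod.Lex.isStrictTotalOrder {α β : Type*} (r : α → α → Prop) (s : β → β → Prop)
    [IsStrictTotalOrder α r] [IsStrictTotalOrder β s] :
    IsStrictTotalOrder (α × β) (Prod.Lex r s) := {}

namespace Betweenness

variable {S ι : Type*}

def Satisfies (r : S → S → Prop) (t : S × S × S) : Prop :=
  (r t.1 t.2.1 ∧ r t.2.1 t.2.2) ∨ (r t.2.2 t.2.1 ∧ r t.2.1 t.1)

noncomputable def minViolations (R : Set (S × S × S)) : ℕ :=
  sInf {m : ℕ | ∃ r : S → S → Prop, IsStrictTotalOrder S r ∧ m = violCount R r}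

def copies (R : Set (S × S × S)) (ι : Type*) : Set ((S × ι) × (S × ι) × (S × ι)) :=
  {t | ∃ a b c : S, ∃ i : ι, (a, b, c) ∈ R ∧ t = ((a, i), (b, i), (c, i))}

def restrictCopy (r : S × ι → S × ι → Prop) (i : ι) : S → S → Prop :=
  Function.onFun r fun a => (a, i)

theorem violCount_eq_ncard (R : Set (S × S × S)) (r : S → S → Prop) :
    violCount R r = {t ∈ R | ¬ Satisfies r t}.ncard :=
  rfl

theorem minViolations_le (R : Set (S × S × S)) {r : S → S → Prop} (hr : IsStrictTotalOrder S r) :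
    minViolations R ≤ violCount R r :=
  Nat.sInf_le ⟨r, hr, rfl⟩

theorem exists_violCount_eq_minViolations (R : Set (S × S × S)) :
    ∃ r : S → S → Prop, IsStrictTotalOrder S r ∧ violCount R r = minViolations R := by
  have hne : {m : ℕ | ∃ r : S → S → Prop, IsStrictTotalOrder S r ∧ m = violCount R r}.Nonempty :=
    ⟨_, WellOrderingRel, inferInstance, rfl⟩
  obtain ⟨r, hr, h⟩ := Nat.sInf_mem hne
  exact ⟨r, hr, h.symm⟩

theorem isStrictTotalOrder_restrictCopy {r : S × ι → S × ι → Prop} [IsStrictTotalOrder _ r]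
    (i : ι) : IsStrictTotalOrder S (restrictCopy r i) :=
  (Prod.mk_left_injective i).isStrictTotalOrder_onFun r

theorem restrictCopy_lex (r : S → S → Prop) {s : ι → ι → Prop} [Std.Irrefl s] (i : ι) :
    restrictCopy (Prod.Lex r s) i = r := by
  funext a b
  simp [restrictCopy, Function.onFun, Prod.lex_def, irrefl]

def violatedCopiesEquiv (R : Set (S × S × S)) (r : S × ι → S × ι → Prop) :
    {t ∈ copies R ι | ¬ Satisfies r t} ≃ Σ i : ι, {t ∈ R | ¬ Satisfies (restrictCopy r i) t} where
  toFun x := ⟨x.1.1.2, (x.1.1.1, x.1.2.1.1, x.1.2.2.1), by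
    obtain ⟨_, ⟨a, b, c, i, hR, rfl⟩, hviol⟩ := x
    exact ⟨hR, hviol⟩⟩
  invFun y := ⟨((y.2.1.1, y.1), (y.2.1.2.1, y.1), (y.2.1.2.2, y.1)),
    ⟨_, _, _, _, y.2.2.1, rfl⟩, y.2.2.2⟩
  left_inv := by
    rintro ⟨_, ⟨a, b, c, i, hR, rfl⟩, hviol⟩
    rfl
  right_inv _ := rfl

theorem violCount_copies [Finite S] [Fintype ι] (R : Set (S × S × S))
    (r : S × ι → S × ι → Prop) :
    violCount (copies R ι) r = ∑ i, violCount R (restrictCopy r i) := by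
  have : Finite R := Set.toFinite R
  rw [violCount_eq_ncard, ← Nat.card_coe_set_eq, Nat.card_congr (violatedCopiesEquiv R r),
    Nat.card_sigma]
  simp only [violCount_eq_ncard, Nat.card_coe_set_eq]

theorem minViolations_copies [Finite S] [Fintype ι] (R : Set (S × S × S)) :
    minViolations (copies R ι) = Fintype.card ι * minViolations R := by
  obtain ⟨r₀, hr₀, hr₀min⟩ := exists_violCount_eq_minViolations R
  have upper : minViolations (copies R ι) ≤ Fintype.card ι * minViolations R := by
    calc minViolations (copies R ι)
        ≤ violCount (copies R ι) (Prod.Lex r₀ WellOrderingRel) := minViolations_le _ inferInstance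
      _ = Fintype.card ι * minViolations R := by
        simp [violCount_copies, restrictCopy_lex, hr₀min]
  obtain ⟨r, hr, hrmin⟩ := exists_violCount_eq_minViolations (copies R ι)
  have lower : Fintype.card ι * minViolations R ≤ minViolations (copies R ι) := by
    calc Fintype.card ι * minViolations R = ∑ _i : ι, minViolations R := by simp
      _ ≤ ∑ i, violCount R (restrictCopy r i) :=
        Finset.sum_le_sum fun i _ => minViolations_le R (isStrictTotalOrder_restrictCopy i)
      _ = minViolations (copies R ι) := by rw [← violCount_copies, hrmin]
  exact le_antisymm upper lower

end Betweenness

open Betweenness in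
theorem copies_multiply_min_violations_general {S : Type*} [Fintype S]
    (R : Set (S × S × S))
    (β : ℕ)
    (R' : Set ((S × Fin (β + 1)) × (S × Fin (β + 1)) × (S × Fin (β + 1))))
    (hR' : R' = {t | ∃ a b c : S, ∃ i : Fin (β + 1),
        (a, b, c) ∈ R ∧ t = ((a, i), (b, i), (c, i))}) :
    sInf {m : ℕ | ∃ r : S × Fin (β + 1) → S × Fin (β + 1) → Prop,
        IsStrictTotalOrder _ r ∧ m = violCount R' r} =
      (β + 1) * sInf {m : ℕ | ∃ r : S → S → Prop,
        IsStrictTotalOrder S r ∧ m = violCount R r} ∧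
    (β + 1) ∣ sInf {m : ℕ | ∃ r : S × Fin (β + 1) → S × Fin (β + 1) → Prop,
        IsStrictTotalOrder _ r ∧ m = violCount R' r} := by
  subst hR'
  have h : minViolations (copies R (Fin (β + 1))) = (β + 1) * minViolations R := by
    rw [minViolations_copies, Fintype.card_fin]
  exact ⟨h, ⟨_, h⟩⟩

/-- Taking `β + 1` disjoint copies of a betweenness instance `(S, R)` multiplies
the minimum number of violated restrictions (over all strict total orders) by
`β + 1`; in particular this minimum is divisible by `β + 1`. -/
theorem copies_multiply_min_violations {S : Type*} [Fintype S]
    (R : Set (S × S × S))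
    (hR : ∀ t ∈ R, t.1 ≠ t.2.1 ∧ t.2.1 ≠ t.2.2 ∧ t.1 ≠ t.2.2)
    (β : ℕ) (hβ : 0 < β)
    (R' : Set ((S × Fin (β + 1)) × (S × Fin (β + 1)) × (S × Fin (β + 1))))
    (hR' : R' = {t | ∃ a b c : S, ∃ i : Fin (β + 1),
        (a, b, c) ∈ R ∧ t = ((a, i), (b, i), (c, i))}) :
    sInf {m : ℕ | ∃ r : S × Fin (β + 1) → S × Fin (β + 1) → Prop,
        IsStrictTotalOrder _ r ∧ m = violCount R' r} =
      (β + 1) * sInf {m : ℕ | ∃ r : S → S → Prop,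
        IsStrictTotalOrder S r ∧ m = violCount R r} ∧
    (β + 1) ∣ sInf {m : ℕ | ∃ r : S × Fin (β + 1) → S × Fin (β + 1) → Prop,
        IsStrictTotalOrder _ r ∧ m = violCount R' r} :=
  copies_multiply_min_violations_general R β R' hR'
end

section
/- Let S be a finite set, R ⊆ S³ a set of restrictions with pairwise distinct entries, and suppose (A, B) is a separation of the 'support' graph H on S (where H has an edge {a,b} whenever a and b occur together in some restriction) such that every restriction has all three of its elements inside A or all three inside B. If ≺_A and ≺_B are total orders on A and B that agree on A ∩ B (i.e., their restrictions to A ∩ B coincide), then there exists a total order ≺ on S extending ≺_A on A and ≺_B on B whose number of violated restrictions equals the number violated by ≺_A on restrictions within A plus the number violated by ≺_B on restrictions within B minus the number violated by both within A ∩ B. -/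
/-- The restriction `t = (a,b,c)` is satisfied by `r`: `a ≺ b ≺ c` or `c ≺ b ≺ a`. -/
def Satisfies {S : Type*} (r : S → S → Prop) (t : S × S × S) : Prop :=
  (r t.1 t.2.1 ∧ r t.2.1 t.2.2) ∨ (r t.2.2 t.2.1 ∧ r t.2.1 t.1)

/-- The number of restrictions in `Rs` violated by `r`. -/
noncomputable def violOn {S : Type*} (r : S → S → Prop) (Rs : Set (S × S × S)) : ℕ :=
  {t ∈ Rs | ¬ Satisfies r t}.ncard

/-- `r` is a strict total order on the subset `A`. -/
def STOOn {S : Type*} (r : S → S → Prop) (A : Set S) : Prop :=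
  (∀ a ∈ A, ¬ r a a) ∧
  (∀ a ∈ A, ∀ b ∈ A, ∀ c ∈ A, r a b → r b c → r a c) ∧
  (∀ a ∈ A, ∀ b ∈ A, a ≠ b → r a b ∨ r b a) ∧
  (∀ a ∈ A, ∀ b ∈ A, r a b → ¬ r b a)

/-!
The reflexive-transitive closure of "`≺_A` on `A` or `≺_B` on `B`" is a partial order: any chain
of such steps collapses to at most two steps meeting in `A ∩ B`, where the two orders agree, so
it has no cycles. Any linear extension (Szpilrajn) then extends both orders. Since every
restriction lies inside `A` or inside `B`, the violated restrictions split into those within `A`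
and those within `B`, and inclusion–exclusion gives the count.
-/

open Relation

theorem exists_isStrictTotalOrder_le_of_acyclic {α : Type*} (q : α → α → Prop)
    (hq : ∀ x, ¬ TransGen q x x) : ∃ r, IsStrictTotalOrder α r ∧ q ≤ r := by
  have : IsPartialOrder α (ReflTransGen q) :=
    { refl := fun _ => .refl
      trans := fun _ _ _ => ReflTransGen.trans
      antisymm := fun x y hxy hyx => by
        rcases reflTransGen_iff_eq_or_transGen.mp hxy with h | h
        · exact h.symm
        rcases reflTransGen_iff_eq_or_transGen.mp hyx with h' | h'
        · exact h'
        exact (hq x (h.trans h')).elim }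
  obtain ⟨s, hs, hle⟩ := extend_partialOrder (ReflTransGen q)
  refine ⟨fun x y => ¬ s y x, ?_, fun x y hxy hyx => ?_⟩
  · exact
      { trichotomous := fun x y hxy hyx => antisymm (not_not.mp hyx) (not_not.mp hxy)
        irrefl := fun x hx => hx (refl x)
        trans := fun x y z hyx hzy hzx =>
          hzy (_root_.trans hzx ((total_of s x y).resolve_right hyx)) }
  · obtain rfl : x = y := antisymm (hle x y (.single hxy)) hyx
    exact hq x (.single hxy)

section Gluing

variable {S : Type*} {A B : Set S} {rA rB : S → S → Prop}

theorem STOOn.iff_of_imp (hA : STOOn rA A) {r : S → S → Prop} [IsStrictOrder S r]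
    (h : ∀ x ∈ A, ∀ y ∈ A, rA x y → r x y) : ∀ x ∈ A, ∀ y ∈ A, (r x y ↔ rA x y) := by
  intro x hx y hy
  refine ⟨fun hxy => ?_, h x hx y hy⟩
  by_contra hn
  have hne : x ≠ y := by
    rintro rfl
    exact irrefl x hxy
  exact asymm hxy (h y hy x hx ((hA.2.2.1 x hx y hy hne).resolve_left hn))

def unionOn (A B : Set S) (rA rB : S → S → Prop) (x y : S) : Prop :=
  (x ∈ A ∧ y ∈ A ∧ rA x y) ∨ (x ∈ B ∧ y ∈ B ∧ rB x y)

variable (hA : STOOn rA A) (hB : STOOn rB B)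
  (hagree : ∀ x ∈ A ∩ B, ∀ y ∈ A ∩ B, (rA x y ↔ rB x y))
include hA hB

theorem unionOn_irrefl (x : S) : ¬ unionOn A B rA rB x x := by
  rintro (⟨hx, -, h⟩ | ⟨hx, -, h⟩)
  exacts [hA.1 x hx h, hB.1 x hx h]

theorem unionOn_trans_or_mem_inter {x y z : S} (hxy : unionOn A B rA rB x y)
    (hyz : unionOn A B rA rB y z) : unionOn A B rA rB x z ∨ y ∈ A ∩ B := by
  rcases hxy with ⟨hx, hy, h⟩ | ⟨hx, hy, h⟩ <;> rcases hyz with ⟨hy', hz, h'⟩ | ⟨hy', hz, h'⟩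
  · exact .inl (.inl ⟨hx, hz, hA.2.1 x hx y hy z hz h h'⟩)
  · exact .inr ⟨hy, hy'⟩
  · exact .inr ⟨hy', hy⟩
  · exact .inl (.inr ⟨hx, hz, hB.2.1 x hx y hy z hz h h'⟩)

include hagree

theorem unionOn_trans_of_mem_inter {x m y : S} (hxm : unionOn A B rA rB x m)
    (hmy : unionOn A B rA rB m y) (hm : m ∈ A ∩ B) (hy : y ∈ A ∩ B) :
    unionOn A B rA rB x y := by
  have hmyA : rA m y := by
    rcases hmy with ⟨-, -, h⟩ | ⟨-, -, h⟩
    exacts [h, (hagree m hm y hy).2 h]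
  rcases hxm with ⟨hx, -, h⟩ | ⟨hx, -, h⟩
  · exact .inl ⟨hx, hy.1, hA.2.1 x hx m hm.1 y hy.1 h hmyA⟩
  · exact .inr ⟨hx, hy.2, hB.2.1 x hx m hm.2 y hy.2 h ((hagree m hm y hy).1 hmyA)⟩

theorem unionOn_of_transGen {x y : S} (h : TransGen (unionOn A B rA rB) x y) :
    unionOn A B rA rB x y ∨ ∃ m ∈ A ∩ B, unionOn A B rA rB x m ∧ unionOn A B rA rB m y := by
  induction h with
  | single h => exact .inl h
  | tail _ hyz ih =>
    rcases ih with hxy | ⟨m, hm, hxm, hmy⟩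
    · rcases unionOn_trans_or_mem_inter hA hB hxy hyz with hxz | hy
      · exact .inl hxz
      · exact .inr ⟨_, hy, hxy, hyz⟩
    · rcases unionOn_trans_or_mem_inter hA hB hmy hyz with hmz | hy
      · exact .inr ⟨m, hm, hxm, hmz⟩
      · exact .inr ⟨_, hy, unionOn_trans_of_mem_inter hA hB hagree hxm hmy hm hy, hyz⟩

theorem not_transGen_unionOn_self (x : S) : ¬ TransGen (unionOn A B rA rB) x x := by
  intro h
  rcases unionOn_of_transGen hA hB hagree h with hxx | ⟨m, hm, hxm, hmx⟩
  · exact unionOn_irrefl hA hB x hxx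
  · rcases unionOn_trans_or_mem_inter hA hB hmx hxm with hmm | hx
    · exact unionOn_irrefl hA hB m hmm
    · exact unionOn_irrefl hA hB x (unionOn_trans_of_mem_inter hA hB hagree hxm hmx hm hx)

theorem exists_isStrictTotalOrder_extending :
    ∃ r : S → S → Prop, IsStrictTotalOrder S r ∧
      (∀ x ∈ A, ∀ y ∈ A, (r x y ↔ rA x y)) ∧ (∀ x ∈ B, ∀ y ∈ B, (r x y ↔ rB x y)) := by
  obtain ⟨r, hr, hle⟩ := exists_isStrictTotalOrder_le_of_acyclic _
    (not_transGen_unionOn_self hA hB hagree)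
  exact ⟨r, hr, hA.iff_of_imp fun x hx y hy h => hle x y (.inl ⟨hx, hy, h⟩),
    hB.iff_of_imp fun x hx y hy h => hle x y (.inr ⟨hx, hy, h⟩)⟩

end Gluing

section Counting

variable {S : Type*} {A : Set S} {r r' : S → S → Prop}

theorem satisfies_congr (h : ∀ x ∈ A, ∀ y ∈ A, (r x y ↔ r' x y)) {t : S × S × S}
    (ht : t.1 ∈ A ∧ t.2.1 ∈ A ∧ t.2.2 ∈ A) : Satisfies r t ↔ Satisfies r' t := by
  obtain ⟨h1, h2, h3⟩ := ht
  rw [Satisfies, Satisfies, h _ h1 _ h2, h _ h2 _ h3, h _ h3 _ h2, h _ h2 _ h1]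

theorem violOn_congr (h : ∀ x ∈ A, ∀ y ∈ A, (r x y ↔ r' x y)) {Rs : Set (S × S × S)}
    (hRs : ∀ t ∈ Rs, t.1 ∈ A ∧ t.2.1 ∈ A ∧ t.2.2 ∈ A) : violOn r Rs = violOn r' Rs :=
  congrArg Set.ncard <| Set.sep_ext_iff.mpr fun t ht => not_congr (satisfies_congr h (hRs t ht))

theorem violOn_union_add_violOn_inter [Finite S] (r : S → S → Prop) (R₁ R₂ : Set (S × S × S)) :
    violOn r (R₁ ∪ R₂) + violOn r (R₁ ∩ R₂) = violOn r R₁ + violOn r R₂ := by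
  have hunion : {t ∈ R₁ ∪ R₂ | ¬ Satisfies r t} =
      {t ∈ R₁ | ¬ Satisfies r t} ∪ {t ∈ R₂ | ¬ Satisfies r t} := Set.sep_union
  have hinter : {t ∈ R₁ ∩ R₂ | ¬ Satisfies r t} =
      {t ∈ R₁ | ¬ Satisfies r t} ∩ {t ∈ R₂ | ¬ Satisfies r t} := Set.sep_inter
  rw [violOn, violOn, hunion, hinter]
  exact Set.ncard_union_add_ncard_inter _ _ (Set.toFinite _) (Set.toFinite _)

end Counting

theorem glue_orders_across_separation_general {S : Type*} [Fintype S]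
    (R : Set (S × S × S))
    (A B : Set S)
    (hwithin : ∀ t ∈ R, (t.1 ∈ A ∧ t.2.1 ∈ A ∧ t.2.2 ∈ A) ∨
                        (t.1 ∈ B ∧ t.2.1 ∈ B ∧ t.2.2 ∈ B))
    (rA rB : S → S → Prop) (hA : STOOn rA A) (hB : STOOn rB B)
    (hagree : ∀ x ∈ A ∩ B, ∀ y ∈ A ∩ B, (rA x y ↔ rB x y)) :
    ∃ r : S → S → Prop, IsStrictTotalOrder S r ∧
      (∀ x ∈ A, ∀ y ∈ A, (r x y ↔ rA x y)) ∧
      (∀ x ∈ B, ∀ y ∈ B, (r x y ↔ rB x y)) ∧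
      violOn r R =
        violOn rA {t ∈ R | t.1 ∈ A ∧ t.2.1 ∈ A ∧ t.2.2 ∈ A} +
        violOn rB {t ∈ R | t.1 ∈ B ∧ t.2.1 ∈ B ∧ t.2.2 ∈ B} -
        violOn rA {t ∈ R | t.1 ∈ A ∩ B ∧ t.2.1 ∈ A ∩ B ∧ t.2.2 ∈ A ∩ B} := by
  obtain ⟨r, hr, hrA, hrB⟩ := exists_isStrictTotalOrder_extending hA hB hagree
  refine ⟨r, hr, hrA, hrB, ?_⟩
  set RA := {t ∈ R | t.1 ∈ A ∧ t.2.1 ∈ A ∧ t.2.2 ∈ A}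
  set RB := {t ∈ R | t.1 ∈ B ∧ t.2.1 ∈ B ∧ t.2.2 ∈ B}
  set RAB := {t ∈ R | t.1 ∈ A ∩ B ∧ t.2.1 ∈ A ∩ B ∧ t.2.2 ∈ A ∩ B}
  have hR : R = RA ∪ RB := Set.ext fun t =>
    ⟨fun ht => (hwithin t ht).imp (⟨ht, ·⟩) (⟨ht, ·⟩), by rintro (⟨ht, -⟩ | ⟨ht, -⟩) <;> exact ht⟩
  have hRAB : RAB = RA ∩ RB := by
    ext t
    simp only [RA, RB, RAB, Set.mem_ofPred_eq, Set.mem_inter_iff]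
    tauto
  have hcount := violOn_union_add_violOn_inter r RA RB
  rw [← hR, ← hRAB] at hcount
  have hA' : violOn r RA = violOn rA RA := violOn_congr hrA fun _ ht => ht.2
  have hB' : violOn r RB = violOn rB RB := violOn_congr hrB fun _ ht => ht.2
  have hAB' : violOn r RAB = violOn rA RAB :=
    violOn_congr (fun x hx y hy => hrA x hx.1 y hy.1) fun _ ht => ht.2
  omega

/-- Gluing orders across a separation: if `(A, B)` is a separation of the
support graph of `R` (so `A ∪ B = S` and every restriction lies entirely
inside `A` or entirely inside `B`), and `≺_A`, `≺_B` are total orders on `A`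
and `B` agreeing on `A ∩ B`, then there is a total order `≺` on `S` extending
both whose number of violated restrictions equals the number violated by
`≺_A` within `A` plus the number violated by `≺_B` within `B` minus the
number violated within `A ∩ B`. -/
theorem glue_orders_across_separation {S : Type*} [Fintype S]
    (R : Set (S × S × S))
    (hRdist : ∀ t ∈ R, t.1 ≠ t.2.1 ∧ t.2.1 ≠ t.2.2 ∧ t.1 ≠ t.2.2)
    (A B : Set S) (hcover : A ∪ B = Set.univ)
    (hsep : ∀ a ∈ A \ B, ∀ b ∈ B \ A,
      ¬ ∃ t ∈ R, a ∈ ({t.1, t.2.1, t.2.2} : Set S) ∧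
                 b ∈ ({t.1, t.2.1, t.2.2} : Set S))
    (hwithin : ∀ t ∈ R, (t.1 ∈ A ∧ t.2.1 ∈ A ∧ t.2.2 ∈ A) ∨
                        (t.1 ∈ B ∧ t.2.1 ∈ B ∧ t.2.2 ∈ B))
    (rA rB : S → S → Prop) (hA : STOOn rA A) (hB : STOOn rB B)
    (hagree : ∀ x ∈ A ∩ B, ∀ y ∈ A ∩ B, (rA x y ↔ rB x y)) :
    ∃ r : S → S → Prop, IsStrictTotalOrder S r ∧
      (∀ x ∈ A, ∀ y ∈ A, (r x y ↔ rA x y)) ∧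
      (∀ x ∈ B, ∀ y ∈ B, (r x y ↔ rB x y)) ∧
      violOn r R =
        violOn rA {t ∈ R | t.1 ∈ A ∧ t.2.1 ∈ A ∧ t.2.2 ∈ A} +
        violOn rB {t ∈ R | t.1 ∈ B ∧ t.2.1 ∈ B ∧ t.2.2 ∈ B} -
        violOn rA {t ∈ R | t.1 ∈ A ∩ B ∧ t.2.1 ∈ A ∩ B ∧ t.2.2 ∈ A ∩ B} :=
  glue_orders_across_separation_general R A B hwithin rA rB hA hB hagree
end
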